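/- The series K(z) = Σ_{j=−∞}^{∞} (−1)^j e^{-2j²z²} converges absolutely for every z > 0, K is nondecreasing on (0, ∞), lim_{z→0⁺} K(z) = 0 and lim_{z→∞} K(z) = 1, so K (extended by 0 on (−∞,0]) is a probability distribution function. -/

import Mathlib

/-!
For `z ≥ 1`, grouping the terms in pairs writes `K z - 1` as a series of brackets
`2 (e^{-2(2k+2)²z²} - e^{-2(2k+1)²z²})`, each nondecreasing in `z` there. For `z ≤ 1`, the theta
transformation formula gives `K z = √(π/2) Σₙ u e^{-π²(n+1/2)² u²/2}` with `u = 1/z`: a series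
of nonnegative terms, each nonincreasing in `u ≥ 1`. This also yields `K ≥ 0`, and, by dominated
convergence, `K z → 0` as `z → 0⁺`; dominated convergence in the original series gives `K z → 1`
as `z → ∞`.
-/

open Set Filter

/-- Kolmogorov's distribution function `K(z) = Σ_{j∈ℤ} (−1)^j e^{−2j²z²}`. -/
noncomputable def kolmogorovK (z : ℝ) : ℝ :=
  ∑' j : ℤ, (-1 : ℝ) ^ j * Real.exp (-2 * (j : ℝ) ^ 2 * z ^ 2)

open Real Topology

lemma summable_int_exp_neg_mul_sq {a : ℝ} (ha : 0 < a) :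
    Summable fun j : ℤ => rexp (-a * j ^ 2) :=
  (HurwitzZeta.hasSum_int_evenKernel 0 (div_pos ha pi_pos)).summable.congr fun j => by
    rw [add_zero]
    field_simp

lemma HasSum.add_pairs {G : Type*} [NormedAddCommGroup G] [CompleteSpace G] {f : ℕ → G} {a : G}
    (hf : HasSum f a) : HasSum (fun k => f (2 * k) + f (2 * k + 1)) a := by
  obtain ⟨b, heven⟩ := hf.summable.comp_injective (mul_right_injective₀ two_ne_zero)
  obtain ⟨c, hodd⟩ := hf.summable.comp_injective
    ((add_left_injective 1).comp (mul_right_injective₀ (two_ne_zero' ℕ)))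
  have hsum := heven.add hodd
  rwa [(heven.even_add_odd hodd).unique hf] at hsum

lemma tendsto_mul_exp_neg_mul_sq_atTop_nhds_zero {c : ℝ} (hc : 0 < c) :
    Tendsto (fun u => u * rexp (-(c * u ^ 2))) atTop (𝓝 0) := by
  have h := (tendsto_rpow_mul_exp_neg_mul_atTop_nhds_zero (1 / 2) c hc).comp
    (tendsto_pow_atTop (α := ℝ) two_ne_zero)
  refine h.congr' ?_
  filter_upwards [eventually_ge_atTop 0] with u hu
  simp only [Function.comp_apply, ← sqrt_eq_rpow, sqrt_sq hu, neg_mul]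

lemma antitoneOn_mul_exp_neg_mul_sq {a c : ℝ} (ha : 0 ≤ a) (hca : 1 ≤ 2 * c * a ^ 2) :
    AntitoneOn (fun u => u * rexp (-(c * u ^ 2))) (Ici a) := by
  have hderiv (u : ℝ) : HasDerivAt (fun u => u * rexp (-(c * u ^ 2)))
      (rexp (-(c * u ^ 2)) * (1 - 2 * c * u ^ 2)) u := by
    refine ((hasDerivAt_id u).mul (((hasDerivAt_pow 2 u).const_mul c).neg.exp)).congr_deriv ?_
    simp only [id, Pi.neg_apply]
    ring
  refine antitoneOn_of_deriv_nonpos (convex_Ici a)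
    (fun u _ => (hderiv u).continuousAt.continuousWithinAt)
    (fun u _ => (hderiv u).differentiableAt.differentiableWithinAt) fun u hu => ?_
  rw [interior_Ici] at hu
  rw [(hderiv u).deriv]
  have hau : a ^ 2 ≤ u ^ 2 := pow_le_pow_left₀ ha (le_of_lt hu) 2
  have hc : 0 < c := by nlinarith
  exact mul_nonpos_of_nonneg_of_nonpos (exp_pos _).le (by nlinarith)

lemma monotoneOn_exp_neg_mul_sub_exp_neg_mul {A B s₀ : ℝ} (hA : 0 < A) (hAB : A ≤ B)
    (hs₀ : 1 ≤ A * s₀) : MonotoneOn (fun s => rexp (-(B * s)) - rexp (-(A * s))) (Ici s₀) := by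
  have hderiv (s : ℝ) : HasDerivAt (fun s => rexp (-(B * s)) - rexp (-(A * s)))
      (A * rexp (-(A * s)) - B * rexp (-(B * s))) s := by
    refine ((((hasDerivAt_id s).const_mul B).neg.exp).sub
      (((hasDerivAt_id s).const_mul A).neg.exp)).congr_deriv ?_
    simp only [id, Pi.neg_apply]
    ring
  refine monotoneOn_of_deriv_nonneg (convex_Ici s₀)
    (fun s _ => (hderiv s).continuousAt.continuousWithinAt)
    (fun s _ => (hderiv s).differentiableAt.differentiableWithinAt) fun s hs => ?_
  rw [interior_Ici] at hs
  rw [(hderiv s).deriv, sub_nonneg]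
  have hAs : 1 ≤ A * s := hs₀.trans (mul_le_mul_of_nonneg_left (le_of_lt hs) hA.le)
  have hBA : B ≤ A * rexp ((B - A) * s) := calc
    B ≤ A * (1 + (B - A) * s) := by nlinarith [mul_nonneg (sub_nonneg.2 hAB) (sub_nonneg.2 hAs)]
    _ ≤ A * rexp ((B - A) * s) := by gcongr; linarith [add_one_le_exp ((B - A) * s)]
  calc B * rexp (-(B * s)) ≤ A * rexp ((B - A) * s) * rexp (-(B * s)) := by gcongr
    _ = A * rexp (-(A * s)) := by
      rw [mul_assoc, ← exp_add]
      congr 2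
      ring

lemma monotone_ite_le_of_monotoneOn_Ioi {α β : Type*} [LinearOrder α] [Preorder β] {a : α} {b : β}
    {f : α → β} (hf : MonotoneOn f (Ioi a)) (hb : ∀ x, a < x → b ≤ f x) :
    Monotone fun x => if x ≤ a then b else f x := by
  intro x y hxy
  by_cases hy : y ≤ a
  · simp [hxy.trans hy, hy]
  by_cases hx : x ≤ a
  · simpa [hx, hy] using hb y (not_le.mp hy)
  · simpa [hx, hy] using hf (not_le.mp hx) (not_le.mp hy) hxy

lemma abs_neg_one_zpow_mul_exp (j : ℤ) (x : ℝ) : |(-1 : ℝ) ^ j * rexp x| = rexp x := by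
  rw [abs_mul, abs_neg_one_zpow, one_mul, abs_of_pos (exp_pos x)]

lemma one_le_pi_sq_mul_int_add_half_sq (n : ℤ) : 1 ≤ π ^ 2 * ((n : ℝ) + 1 / 2) ^ 2 := by
  have hodd : (1 : ℝ) ≤ (2 * n + 1) ^ 2 := by
    exact_mod_cast (one_le_sq_iff_one_le_abs _).2 (Int.one_le_abs (show 2 * n + 1 ≠ 0 by omega))
  nlinarith [pi_gt_three]

open HurwitzZeta in
lemma hasSum_exp_neg_pi_mul_int_add_half_sq {t : ℝ} (ht : 0 < t) :
    HasSum (fun n : ℤ => rexp (-π * (n + 1 / 2) ^ 2 / t))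
      (√t * ∑' n : ℤ, (-1 : ℝ) ^ n * rexp (-π * n ^ 2 * t)) := by
  have hcos : HasSum (fun n : ℤ => (-1 : ℝ) ^ n * rexp (-π * n ^ 2 * t))
      (cosKernel (1 / 2 : ℝ) t) := by
    rw [← Complex.hasSum_ofReal]
    refine (hasSum_int_cosKernel (1 / 2) ht).congr_fun fun n => ?_
    rw [show 2 * (π : ℂ) * Complex.I * ((1 / 2 : ℝ) : ℂ) * n = n * (π * Complex.I) by
      push_cast; ring, Complex.exp_int_mul, Complex.exp_pi_mul_I]
    push_cast
    rfl
  have hfe := evenKernel_functional_equation (1 / 2 : ℝ) (1 / t)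
  rw [one_div_one_div, div_rpow zero_le_one ht.le, one_rpow, one_div_one_div,
    ← sqrt_eq_rpow] at hfe
  rw [hcos.tsum_eq, ← hfe]
  simpa only [mul_one_div] using hasSum_int_evenKernel (1 / 2) (one_div_pos.2 ht)

lemma summable_abs_kolmogorovK_term {z : ℝ} (hz : 0 < z) :
    Summable fun j : ℤ => |(-1 : ℝ) ^ j * rexp (-2 * j ^ 2 * z ^ 2)| :=
  (summable_int_exp_neg_mul_sq (by positivity : 0 < 2 * z ^ 2)).congr fun j => by
    rw [abs_neg_one_zpow_mul_exp]
    ring_nf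

lemma hasSum_kolmogorovK {z : ℝ} (hz : 0 < z) :
    HasSum (fun j : ℤ => (-1 : ℝ) ^ j * rexp (-2 * j ^ 2 * z ^ 2)) (kolmogorovK z) :=
  (summable_abs_kolmogorovK_term hz).of_abs.hasSum

noncomputable def kolmogorovDualTerm (n : ℤ) (u : ℝ) : ℝ :=
  √(π / 2) * (u * rexp (-(π ^ 2 * (n + 1 / 2) ^ 2 / 2 * u ^ 2)))

lemma hasSum_kolmogorovDualTerm {z : ℝ} (hz : 0 < z) :
    HasSum (fun n => kolmogorovDualTerm n z⁻¹) (kolmogorovK z) := by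
  have ht : 0 < 2 * z ^ 2 / π := by positivity
  have h := (hasSum_exp_neg_pi_mul_int_add_half_sq ht).mul_left (√(π / 2) * z⁻¹)
  have hK : ∑' n : ℤ, (-1 : ℝ) ^ n * rexp (-π * n ^ 2 * (2 * z ^ 2 / π)) = kolmogorovK z := by
    unfold kolmogorovK
    congr! 3 with n
    field_simp
  have hconst : √(π / 2) * z⁻¹ * √(2 * z ^ 2 / π) = 1 := by
    rw [mul_right_comm, ← sqrt_mul (by positivity), show π / 2 * (2 * z ^ 2 / π) = z ^ 2 by
      field_simp, sqrt_sq hz.le, mul_inv_cancel₀ hz.ne']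
  rw [hK, ← mul_assoc, hconst, one_mul] at h
  refine h.congr_fun fun n => ?_
  rw [kolmogorovDualTerm, mul_assoc]
  congr 3
  field_simp

lemma kolmogorovDualTerm_nonneg (n : ℤ) {u : ℝ} (hu : 0 ≤ u) : 0 ≤ kolmogorovDualTerm n u := by
  unfold kolmogorovDualTerm
  positivity

lemma antitoneOn_kolmogorovDualTerm (n : ℤ) : AntitoneOn (kolmogorovDualTerm n) (Ici 1) :=
  fun _ hu _ hv huv => mul_le_mul_of_nonneg_left
    (antitoneOn_mul_exp_neg_mul_sq zero_le_one (by linarith [one_le_pi_sq_mul_int_add_half_sq n])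
      hu hv huv) (sqrt_nonneg _)

lemma tendsto_kolmogorovDualTerm_atTop (n : ℤ) :
    Tendsto (kolmogorovDualTerm n) atTop (𝓝 0) := by
  have hc : 0 < π ^ 2 * ((n : ℝ) + 1 / 2) ^ 2 / 2 := by
    linarith [one_le_pi_sq_mul_int_add_half_sq n]
  have h := (tendsto_mul_exp_neg_mul_sq_atTop_nhds_zero hc).const_mul (√(π / 2))
  rwa [mul_zero] at h

lemma kolmogorovK_nonneg {z : ℝ} (hz : 0 < z) : 0 ≤ kolmogorovK z :=
  (hasSum_kolmogorovDualTerm hz).nonneg fun n => kolmogorovDualTerm_nonneg n (inv_pos.2 hz).le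

lemma monotoneOn_kolmogorovK_Ioc : MonotoneOn kolmogorovK (Ioc 0 1) :=
  fun _ h₁ _ h₂ h₁₂ => hasSum_le
    (fun n => antitoneOn_kolmogorovDualTerm n ((one_le_inv₀ h₂.1).2 h₂.2)
      ((one_le_inv₀ h₁.1).2 h₁.2) (inv_anti₀ h₁.1 h₁₂))
    (hasSum_kolmogorovDualTerm h₁.1) (hasSum_kolmogorovDualTerm h₂.1)

lemma tendsto_kolmogorovK_nhdsGT_zero : Tendsto kolmogorovK (𝓝[>] 0) (𝓝 0) := by
  have hbound : ∀ᶠ z in 𝓝[>] (0 : ℝ), ∀ n,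
      ‖kolmogorovDualTerm n z⁻¹‖ ≤ kolmogorovDualTerm n 1 := by
    filter_upwards [Ioc_mem_nhdsGT one_pos] with z hz n
    have hu : 1 ≤ z⁻¹ := (one_le_inv₀ hz.1).2 hz.2
    rw [norm_of_nonneg (kolmogorovDualTerm_nonneg n (zero_le_one.trans hu))]
    exact antitoneOn_kolmogorovDualTerm n (mem_Ici.2 le_rfl) hu hu
  have hlim := tendsto_tsum_of_dominated_convergence
    (by simpa using (hasSum_kolmogorovDualTerm one_pos).summable)
    (fun n => (tendsto_kolmogorovDualTerm_atTop n).comp tendsto_inv_nhdsGT_zero) hbound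
  rw [tsum_zero] at hlim
  refine hlim.congr' ?_
  filter_upwards [self_mem_nhdsWithin] with z hz
  exact (hasSum_kolmogorovDualTerm hz).tsum_eq

lemma hasSum_kolmogorovK_sub_one {z : ℝ} (hz : 0 < z) :
    HasSum (fun k : ℕ => 2 * (rexp (-(2 * (2 * k + 2) ^ 2 * z ^ 2))
      - rexp (-(2 * (2 * k + 1) ^ 2 * z ^ 2)))) (kolmogorovK z - 1) := by
  set g : ℕ → ℝ := fun n => 2 * ((-1 : ℝ) ^ n * rexp (-2 * n ^ 2 * z ^ 2))
  have hg : HasSum g (kolmogorovK z + 1) := by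
    have h := (hasSum_kolmogorovK hz).nat_add_neg
    norm_num [← inv_pow] at h
    exact h.congr_fun fun n => by simp only [g, neg_mul]; ring
  have htail : HasSum (fun n => g (n + 1)) (kolmogorovK z - 1) := by
    have h := (hasSum_nat_add_iff' 1).2 hg
    rwa [Finset.sum_range_one, show g 0 = 2 by simp [g],
      show kolmogorovK z + 1 - 2 = kolmogorovK z - 1 by ring] at h
  refine htail.add_pairs.congr_fun fun k => ?_
  have hodd : (-1 : ℝ) ^ (2 * k + 1) = -1 := Odd.neg_one_pow ⟨k, rfl⟩
  have heven : (-1 : ℝ) ^ (2 * k + 1 + 1) = 1 := Even.neg_one_pow ⟨k + 1, by omega⟩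
  simp only [g, hodd, heven]
  push_cast
  ring_nf

lemma monotoneOn_kolmogorovK_Ici : MonotoneOn kolmogorovK (Ici 1) := by
  intro z₁ h₁ z₂ h₂ h₁₂
  have hs₁ : (1 : ℝ) ≤ z₁ ^ 2 := one_le_pow₀ h₁
  have hs₂ : (1 : ℝ) ≤ z₂ ^ 2 := one_le_pow₀ h₂
  have hs₁₂ : z₁ ^ 2 ≤ z₂ ^ 2 := pow_le_pow_left₀ (zero_le_one.trans h₁) h₁₂ 2
  have hpair (k : ℕ) := monotoneOn_exp_neg_mul_sub_exp_neg_mul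
    (A := 2 * (2 * k + 1) ^ 2) (B := 2 * (2 * k + 2) ^ 2) (by positivity)
    (by nlinarith [k.cast_nonneg (α := ℝ)]) (by nlinarith [k.cast_nonneg (α := ℝ)])
    hs₁ hs₂ hs₁₂
  have h := hasSum_le (fun k => mul_le_mul_of_nonneg_left (hpair k) zero_le_two)
    (hasSum_kolmogorovK_sub_one (zero_lt_one.trans_le h₁))
    (hasSum_kolmogorovK_sub_one (zero_lt_one.trans_le h₂))
  linarith

lemma monotoneOn_kolmogorovK : MonotoneOn kolmogorovK (Ioi 0) := by
  rw [← Ioc_union_Ici_eq_Ioi zero_lt_one]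
  exact monotoneOn_kolmogorovK_Ioc.union_right monotoneOn_kolmogorovK_Ici
    (isGreatest_Ioc zero_lt_one) isLeast_Ici

lemma tendsto_kolmogorovK_atTop : Tendsto kolmogorovK atTop (𝓝 1) := by
  have hterm (j : ℤ) : Tendsto (fun z : ℝ => (-1 : ℝ) ^ j * rexp (-2 * j ^ 2 * z ^ 2)) atTop
      (𝓝 (if j = 0 then 1 else 0)) := by
    by_cases hj : j = 0
    · simp [hj]
    have hneg : -2 * (j : ℝ) ^ 2 < 0 := by
      have hj' : (j : ℝ) ≠ 0 := by exact_mod_cast hj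
      nlinarith [sq_pos_of_ne_zero hj']
    rw [if_neg hj, ← mul_zero ((-1 : ℝ) ^ j)]
    exact (tendsto_exp_atBot.comp
      ((tendsto_pow_atTop two_ne_zero).const_mul_atTop_of_neg hneg)).const_mul _
  have hbound : ∀ᶠ z : ℝ in atTop, ∀ j : ℤ,
      ‖(-1 : ℝ) ^ j * rexp (-2 * j ^ 2 * z ^ 2)‖ ≤ rexp (-2 * j ^ 2) := by
    filter_upwards [eventually_ge_atTop 1] with z hz j
    rw [norm_eq_abs, abs_neg_one_zpow_mul_exp, exp_le_exp]
    nlinarith [one_le_pow₀ (n := 2) hz, sq_nonneg (j : ℝ)]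
  have h := tendsto_tsum_of_dominated_convergence
    (summable_int_exp_neg_mul_sq two_pos) hterm hbound
  rwa [tsum_ite_eq] at h

theorem stmt_18 :
    (∀ z : ℝ, 0 < z →
      Summable (fun j : ℤ => |(-1 : ℝ) ^ j * Real.exp (-2 * (j : ℝ) ^ 2 * z ^ 2)|)) ∧
    MonotoneOn kolmogorovK (Ioi (0 : ℝ)) ∧
    Tendsto kolmogorovK (nhdsWithin 0 (Ioi (0 : ℝ))) (nhds 0) ∧
    Tendsto kolmogorovK atTop (nhds 1) ∧
    Monotone (fun z : ℝ => if z ≤ 0 then 0 else kolmogorovK z) :=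
  ⟨fun _ hz => summable_abs_kolmogorovK_term hz, monotoneOn_kolmogorovK,
    tendsto_kolmogorovK_nhdsGT_zero, tendsto_kolmogorovK_atTop,
    monotone_ite_le_of_monotoneOn_Ioi monotoneOn_kolmogorovK fun _ hz => kolmogorovK_nonneg hz⟩
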